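/- arXiv:1203.3834 — 3 statements merged into one kernel-verified Lean document; each statement's English description precedes it below -/
import Mathlib

section
/- For a formal power series φ(x) = x + higher order terms in one variable over a field F of characteristic zero, the compositional inverse satisfies φ^{-1}(x) = x + Σ_{m=1}^∞ Σ_{k=0}^m (-1)^k C(m,k) φ^{∘k}(x), where φ^{∘k} denotes k-fold composition of φ with itself, φ^{∘0} = id, and the double sum converges in the formal power series topology (each coefficient is determined by finitely many terms). -/
/-!
Write `L f = f ∘ φ`; it is an `R`-linear endomorphism with `L^k X = φ^{∘k}`, so that
`Φ_m = (1 - L)^m X`. Since `φ = x + O(x²)`, composing with `φ` does not change the coefficients of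
degree `≤ n` of a series divisible by `x^n`. Hence `1 - L` raises the `x`-adic order, so
`x^{m+1} ∣ Φ_m`, and `L` is injective modulo every power of `x`. The geometric sum
`L ∑_{m ≤ N} (1 - L)^m = 1 - (1 - L)^{N+1}` gives `(ψ - ∑_{m ≤ N} Φ_m) ∘ φ = Φ_{N+1}`, which is
divisible by `x^{N+2}`; so `ψ ≡ ∑_{m ≤ N} Φ_m` modulo `x^{N+2}`.
-/
open PowerSeries

/-- Composition `f ∘ g` of formal power series in one variable (intended for `g` with zero
constant term): the coefficient of `X^d` only involves `(coeff k f)` for `k ≤ d`. -/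
noncomputable def PowerSeries.compose {F : Type*} [CommRing F] (f g : PowerSeries F) :
    PowerSeries F :=
  PowerSeries.mk fun d => ∑ k ∈ Finset.range (d + 1), coeff k f * coeff d (g ^ k)

/-- `k`-fold compositional iterate `φ^{∘k}`, with `φ^{∘0} = id = X`. -/
noncomputable def PowerSeries.iterComp {F : Type*} [CommRing F] (φ : PowerSeries F) :
    ℕ → PowerSeries F
  | 0 => PowerSeries.X
  | k + 1 => PowerSeries.compose (PowerSeries.iterComp φ k) φ

/-- `Φ_m = ∑_{k=0}^m (-1)^k C(m,k) φ^{∘k}`. -/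
noncomputable def PowerSeries.Phi {F : Type*} [CommRing F] (φ : PowerSeries F) (m : ℕ) :
    PowerSeries F :=
  ∑ k ∈ Finset.range (m + 1), ((-1 : F) ^ k * (m.choose k : F)) • PowerSeries.iterComp φ k

namespace PowerSeries

variable {R : Type*} [CommRing R]

noncomputable def composeLinear (φ : PowerSeries R) : PowerSeries R →ₗ[R] PowerSeries R where
  toFun f := compose f φ
  map_add' f g := by ext d; simp [compose, add_mul, Finset.sum_add_distrib]
  map_smul' c f := by ext d; simp [compose, Finset.mul_sum, mul_assoc]

@[simp]
lemma composeLinear_apply (φ f : PowerSeries R) : composeLinear φ f = compose f φ := rfl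

lemma iterComp_eq_pow_apply (φ : PowerSeries R) (k : ℕ) :
    iterComp φ k = (composeLinear φ ^ k) X := by
  induction k with
  | zero => rfl
  | succ k ih => rw [pow_succ', Module.End.mul_apply, ← ih, composeLinear_apply]; rfl

lemma Phi_eq_one_sub_pow_apply (φ : PowerSeries R) (m : ℕ) :
    Phi φ m = ((1 - composeLinear φ) ^ m) X := by
  rw [← neg_add_eq_sub, ← neg_one_smul R (composeLinear φ),
    (Commute.one_right _).add_pow, Phi, LinearMap.sum_apply]
  refine Finset.sum_congr rfl fun k _ => ?_
  rw [iterComp_eq_pow_apply, one_pow, mul_one, smul_pow, Module.End.mul_apply,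
    Module.End.natCast_apply, LinearMap.smul_apply, ← Nat.cast_smul_eq_nsmul R,
    LinearMap.map_smul, smul_smul]

@[simp]
lemma Phi_zero (φ : PowerSeries R) : Phi φ 0 = X := by simp [Phi, iterComp]

lemma coeff_pow_self_of_constantCoeff_eq_zero {φ : PowerSeries R} (h0 : constantCoeff φ = 0)
    (d : ℕ) : coeff d (φ ^ d) = coeff 1 φ ^ d := by
  obtain ⟨g, rfl⟩ := X_dvd_iff.mpr h0
  rw [mul_pow, coeff_X_pow_mul', if_pos le_rfl, Nat.sub_self, coeff_zero_eq_constantCoeff,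
    map_pow, ← coeff_zero_eq_constantCoeff, ← coeff_succ_X_mul]

lemma coeff_compose_of_X_pow_dvd {φ f : PowerSeries R} (h0 : constantCoeff φ = 0)
    (h1 : coeff 1 φ = 1) {n d : ℕ} (hf : X ^ n ∣ f) (hd : d ≤ n) :
    coeff d (compose f φ) = coeff d f := by
  rw [compose, coeff_mk, Finset.sum_range_succ, coeff_pow_self_of_constantCoeff_eq_zero h0, h1,
    one_pow, mul_one, add_eq_right]
  refine Finset.sum_eq_zero fun k hk => ?_
  rw [X_pow_dvd_iff.mp hf k (by have := Finset.mem_range.mp hk; omega), zero_mul]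

lemma X_pow_succ_dvd_sub_compose {φ f : PowerSeries R} (h0 : constantCoeff φ = 0)
    (h1 : coeff 1 φ = 1) {n : ℕ} (hf : X ^ n ∣ f) : X ^ (n + 1) ∣ f - compose f φ :=
  X_pow_dvd_iff.mpr fun d hd => by
    rw [map_sub, coeff_compose_of_X_pow_dvd h0 h1 hf (Nat.le_of_lt_succ hd), sub_self]

lemma X_pow_succ_dvd_Phi {φ : PowerSeries R} (h0 : constantCoeff φ = 0) (h1 : coeff 1 φ = 1)
    (m : ℕ) : X ^ (m + 1) ∣ Phi φ m := by
  induction m with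
  | zero => simp
  | succ m ih =>
    rw [Phi_eq_one_sub_pow_apply, pow_succ' (1 - composeLinear φ), Module.End.mul_apply,
      ← Phi_eq_one_sub_pow_apply]
    exact X_pow_succ_dvd_sub_compose h0 h1 ih

lemma X_pow_dvd_of_X_pow_dvd_compose {φ f : PowerSeries R} (h0 : constantCoeff φ = 0)
    (h1 : coeff 1 φ = 1) {n : ℕ} (hf : X ^ n ∣ compose f φ) : X ^ n ∣ f := by
  induction n with
  | zero => simp
  | succ n ih =>
    have hfn : X ^ n ∣ f := ih ((pow_dvd_pow X n.le_succ).trans hf)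
    simpa using dvd_add hf (X_pow_succ_dvd_sub_compose h0 h1 hfn)

lemma compose_sum_Phi (φ : PowerSeries R) (N : ℕ) :
    compose (∑ m ∈ Finset.range (N + 1), Phi φ m) φ = X - Phi φ (N + 1) := by
  have h := congrArg (· X) (mul_neg_geom_sum (1 - composeLinear φ) (N + 1))
  simp only [sub_sub_cancel, Module.End.mul_apply, LinearMap.sum_apply, map_sum,
    LinearMap.sub_apply, Module.End.one_apply, ← Phi_eq_one_sub_pow_apply] at h
  rw [← composeLinear_apply, map_sum, h]

lemma coeff_eq_sum_coeff_Phi {φ ψ : PowerSeries R} (h0 : constantCoeff φ = 0)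
    (h1 : coeff 1 φ = 1) (hψ : compose ψ φ = X) {d N : ℕ} (hd : d ≤ N) :
    coeff d ψ = ∑ m ∈ Finset.range (N + 1), coeff d (Phi φ m) := by
  have hdiff : compose (ψ - ∑ m ∈ Finset.range (N + 1), Phi φ m) φ = Phi φ (N + 1) := by
    rw [← composeLinear_apply, map_sub, composeLinear_apply, composeLinear_apply, hψ,
      compose_sum_Phi, sub_sub_cancel]
  have hdvd := X_pow_dvd_of_X_pow_dvd_compose h0 h1 (hdiff ▸ X_pow_succ_dvd_Phi h0 h1 (N + 1))
  rw [← map_sum, ← sub_eq_zero, ← map_sub]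
  exact X_pow_dvd_iff.mp hdvd d (by omega)

end PowerSeries

theorem inversion_formula_general {F : Type*} [Field F] (φ : PowerSeries F)
    (h0 : constantCoeff φ = 0) (h1 : coeff 1 φ = 1)
    (ψ : PowerSeries F)
    (hψ : PowerSeries.compose ψ φ = PowerSeries.X) :
    (∀ d : ℕ, ∃ M : ℕ, ∀ m ≥ M, coeff d (PowerSeries.Phi φ m) = 0) ∧
      (∀ d : ℕ, ∀ M : ℕ, (∀ m > M, coeff d (PowerSeries.Phi φ m) = 0) →
        coeff d ψ =
          coeff d (PowerSeries.X : PowerSeries F) +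
            ∑ m ∈ Finset.Icc 1 M, coeff d (PowerSeries.Phi φ m)) := by
  refine ⟨fun d => ⟨d, fun m hm => ?_⟩, fun d M hM => ?_⟩
  · exact X_pow_dvd_iff.mp (X_pow_succ_dvd_Phi h0 h1 m) d (by omega)
  · have htail : ∑ m ∈ Finset.range (max M d + 1), coeff d (Phi φ m)
        = ∑ m ∈ Finset.range (M + 1), coeff d (Phi φ m) := by
      refine (Finset.sum_subset (by simp) fun m _ hm => hM m ?_).symm
      simpa using hm
    rw [coeff_eq_sum_coeff_Phi h0 h1 hψ (le_max_right M d), htail, Finset.range_eq_Ico,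
      Finset.sum_eq_sum_Ico_succ_bot (by omega : 0 < M + 1), Phi_zero, zero_add,
      ← Finset.Ico_add_one_right_eq_Icc]

/-- for `φ(x) = x + higher order terms`, the compositional inverse `ψ`
(characterized by `ψ(φ(x)) = x`) is given by
`φ⁻¹(x) = x + ∑_{m≥1} ∑_{k=0}^m (-1)^k C(m,k) φ^{∘k}(x)`, the outer sum converging in the
formal power series topology: for each degree `d` the inner sums `Φ_m` have vanishing
`d`-th coefficient for all large `m`, and the `d`-th coefficient of `φ⁻¹` is the
(finite) sum of the `d`-th coefficients. -/
theorem inversion_formula {F : Type*} [Field F] [CharZero F] (φ : PowerSeries F)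
    (h0 : constantCoeff φ = 0) (h1 : coeff 1 φ = 1)
    (ψ : PowerSeries F) (hψ0 : constantCoeff ψ = 0)
    (hψ : PowerSeries.compose ψ φ = PowerSeries.X) :
    (∀ d : ℕ, ∃ M : ℕ, ∀ m ≥ M, coeff d (PowerSeries.Phi φ m) = 0) ∧
      (∀ d : ℕ, ∀ M : ℕ, (∀ m > M, coeff d (PowerSeries.Phi φ m) = 0) →
        coeff d ψ =
          coeff d (PowerSeries.X : PowerSeries F) +
            ∑ m ∈ Finset.Icc 1 M, coeff d (PowerSeries.Phi φ m)) :=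
  inversion_formula_general φ h0 h1 ψ hψ
end

section
/- If Σ_{m=m₀}^∞ Φ_m(x) = 0 for some m₀ ≥ 1, then Φ_m(x) = 0 for every m ≥ m₀. -/
open PowerSeries

/-!
Let `C` be precomposition with `φ`, a linear endomorphism of `F⟦X⟧`. Since `φ^{∘k} = Cᵏ X`,
the binomial theorem gives `Φ_m = (1 - C)ᵐ X`, hence `Φ_{m+1} = Φ_m - Φ_m ∘ φ`. Composing the
partial sums `∑_{m₀ ≤ m < N} Φ_m` with `φ` therefore telescopes to `Φ_{m₀} - Φ_N`. For a fixed
coefficient both the left side and `Φ_N` vanish once `N` is large, so `Φ_{m₀} = 0`, and the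
recursion propagates this to every `m ≥ m₀`.
-/

theorem Finset.sum_Ico_eq_sum_Icc_of_forall_gt_eq_zero {M : Type*} [AddCommMonoid M]
    {f : ℕ → M} {a b N : ℕ} (hf : ∀ m > b, f m = 0) (hN : b < N) :
    ∑ m ∈ Ico a N, f m = ∑ m ∈ Icc a b, f m :=
  (sum_subset (fun m hm => by simp only [mem_Icc, mem_Ico] at hm ⊢; omega)
    fun m hm hm' => hf m (by simp only [mem_Icc, mem_Ico, not_and, not_le] at hm hm'; omega)).symm

namespace PowerSeries

open Filter Finset

variable {F : Type*} [CommRing F]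

theorem coeff_compose (f g : F⟦X⟧) (d : ℕ) :
    coeff d (compose f g) = ∑ k ∈ range (d + 1), coeff k f * coeff d (g ^ k) :=
  coeff_mk _ _

noncomputable def composeRight (g : F⟦X⟧) : F⟦X⟧ →ₗ[F] F⟦X⟧ where
  toFun f := compose f g
  map_add' f₁ f₂ := by ext d; simp [coeff_compose, add_mul, sum_add_distrib]
  map_smul' c f := by ext d; simp [coeff_compose, mul_sum, mul_assoc]

theorem composeRight_apply (g f : F⟦X⟧) : composeRight g f = compose f g := rfl

theorem iterComp_eq_composeRight_pow_apply (φ : F⟦X⟧) (k : ℕ) :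
    iterComp φ k = (composeRight φ ^ k) X := by
  induction k with
  | zero => rfl
  | succ k ih => rw [pow_succ', Module.End.mul_apply, ← ih]; rfl

theorem Phi_eq_one_sub_composeRight_pow_apply (φ : F⟦X⟧) (m : ℕ) :
    Phi φ m = ((1 - composeRight φ) ^ m) X := by
  rw [sub_eq_neg_add, (Commute.one_right (-composeRight φ)).add_pow, LinearMap.sum_apply, Phi]
  refine sum_congr rfl fun k _ => ?_
  rw [iterComp_eq_composeRight_pow_apply]
  conv_rhs => rw [one_pow, mul_one, ← Nat.cast_comm, ← nsmul_eq_mul, ← neg_one_smul F, smul_pow,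
    LinearMap.smul_apply, LinearMap.smul_apply]
  rw [mul_comm, mul_smul, Nat.cast_smul_eq_nsmul]

theorem Phi_succ (φ : F⟦X⟧) (m : ℕ) : Phi φ (m + 1) = Phi φ m - compose (Phi φ m) φ := by
  simp only [Phi_eq_one_sub_composeRight_pow_apply, pow_succ', Module.End.mul_apply,
    LinearMap.sub_apply, Module.End.one_apply, composeRight_apply]

theorem compose_sum_Ico_Phi (φ : F⟦X⟧) {m₀ N : ℕ} (h : m₀ ≤ N) :
    compose (∑ m ∈ Ico m₀ N, Phi φ m) φ = Phi φ m₀ - Phi φ N := by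
  rw [← composeRight_apply, map_sum, ← neg_sub, ← sum_Ico_sub _ h, ← sum_neg_distrib]
  refine sum_congr rfl fun m _ => ?_
  rw [composeRight_apply, Phi_succ, neg_sub, sub_sub_cancel]

theorem eventually_coeff_compose_eq_zero {ι : Type*} {l : Filter ι} {s : ι → F⟦X⟧}
    (hs : ∀ k, ∀ᶠ i in l, coeff k (s i) = 0) (g : F⟦X⟧) (d : ℕ) :
    ∀ᶠ i in l, coeff d (compose (s i) g) = 0 := by
  filter_upwards [(eventually_all_finset (range (d + 1))).2 fun k _ => hs k] with i hi
  rw [coeff_compose]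
  exact sum_eq_zero fun k hk => by rw [hi k hk, zero_mul]

theorem Phi_eq_zero_of_eventually_coeff_eq_zero (φ : F⟦X⟧) (m₀ : ℕ)
    (hsum : ∀ d, ∀ᶠ N in atTop, coeff d (∑ m ∈ Ico m₀ N, Phi φ m) = 0)
    (htail : ∀ d, ∀ᶠ N in atTop, coeff d (Phi φ N) = 0) :
    Phi φ m₀ = 0 := by
  ext d
  obtain ⟨N, hN, hcomp, hPhi⟩ := ((eventually_ge_atTop m₀).and
    ((eventually_coeff_compose_eq_zero hsum φ d).and (htail d))).exists
  rw [compose_sum_Ico_Phi φ hN, map_sub, hPhi, sub_zero] at hcomp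
  rw [hcomp, map_zero]

theorem Phi_eq_zero_of_le (φ : F⟦X⟧) {m₀ m : ℕ} (h₀ : Phi φ m₀ = 0) (hm : m₀ ≤ m) :
    Phi φ m = 0 := by
  induction m, hm using Nat.le_induction with
  | base => exact h₀
  | succ m _ ih => rw [Phi_succ, ih, ← composeRight_apply, map_zero, sub_zero]

end PowerSeries

theorem Phi_all_zero_of_sum_zero_general {F : Type*} [Field F] (φ : PowerSeries F) (m₀ : ℕ)
    (hsum : ∀ d : ℕ, ∃ M : ℕ, (∀ m > M, coeff d (PowerSeries.Phi φ m) = 0) ∧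
      ∑ m ∈ Finset.Icc m₀ M, coeff d (PowerSeries.Phi φ m) = 0) :
    ∀ m ≥ m₀, PowerSeries.Phi φ m = 0 := by
  choose M htail hpartial using hsum
  have hm₀ : PowerSeries.Phi φ m₀ = 0 := by
    refine PowerSeries.Phi_eq_zero_of_eventually_coeff_eq_zero φ m₀ (fun d => ?_) (fun d => ?_)
    · filter_upwards [Filter.eventually_gt_atTop (M d)] with N hN
      rw [map_sum, Finset.sum_Ico_eq_sum_Icc_of_forall_gt_eq_zero (htail d) hN, hpartial d]
    · filter_upwards [Filter.eventually_gt_atTop (M d)] with N hN using htail d N hN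
  exact fun m hm => PowerSeries.Phi_eq_zero_of_le φ hm₀ hm

/-- if the (coefficientwise convergent) sum `∑_{m=m₀}^∞ Φ_m(x)` vanishes for
some `m₀ ≥ 1`, then `Φ_m(x) = 0` for every `m ≥ m₀`. -/
theorem Phi_all_zero_of_sum_zero {F : Type*} [Field F] [CharZero F] (φ : PowerSeries F)
    (h0 : constantCoeff φ = 0) (h1 : coeff 1 φ = 1) (m₀ : ℕ) (hm₀ : 1 ≤ m₀)
    (hsum : ∀ d : ℕ, ∃ M : ℕ, (∀ m > M, coeff d (PowerSeries.Phi φ m) = 0) ∧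
      ∑ m ∈ Finset.Icc m₀ M, coeff d (PowerSeries.Phi φ m) = 0) :
    ∀ m ≥ m₀, PowerSeries.Phi φ m = 0 :=
  Phi_all_zero_of_sum_zero_general φ m₀ hsum
end

section
/- Over a field of characteristic zero (or any integral domain in which the relevant binomial coefficients are nonzero), the symmetric product has no zero divisors: A ⊙ B = 0 if and only if A = 0 or B = 0. -/
/-! Multi-index matrices and their symmetric product (Bekbaev). -/

/-- Multi-indices: `n`-tuples of nonnegative integers. -/
abbrev MultiIndex (n : ℕ) := Fin n →₀ ℕ

namespace SymProd

variable {n : ℕ} {R : Type*} [CommRing R]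

/-- `|α| = α₁ + ⋯ + αₙ`. -/
def deg (α : MultiIndex n) : ℕ := α.sum fun _ v => v

/-- `α! = α₁! ⋯ αₙ!`. -/
def mfact (α : MultiIndex n) : ℕ := α.prod fun _ v => v.factorial

/-- The multinomial coefficient `C(α,β) = α!/(β!(α−β)!) = ∏ᵢ C(αᵢ,βᵢ)`. -/
def mchoose (α β : MultiIndex n) : ℕ := ∏ i ∈ α.support ∪ β.support, (α i).choose (β i)

/-- A "matrix" indexed by pairs of multi-indices (row index first). A matrix in
`M(p',p;R)` is such a function supported on rows of degree `p'` and columns of degree `p`. -/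
abbrev Mat (n : ℕ) (R : Type*) := MultiIndex n → MultiIndex n → R

/-- `A` belongs to `M(p',p;R)`: supported on rows `α'` with `|α'| = p'` and columns `α`
with `|α| = p`. -/
def IsHom (p' p : ℕ) (A : Mat n R) : Prop :=
  ∀ α' α, A α' α ≠ 0 → deg α' = p' ∧ deg α = p

/-- The symmetric product
`(A ⊙ B)^{α'}_α = ∑_{β' ≪ α', β ≪ α} C(α,β) A^{β'}_β B^{α'−β'}_{α−β}`.
For `A ∈ M(p',p;R)` and `B ∈ M(q',q;R)` this agrees with Bekbaev's Definition 1
(the degree restrictions on `β, β'` hold automatically on the support of `A`). -/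
noncomputable def odot (A B : Mat n R) : Mat n R := fun α' α =>
  ∑ β' ∈ Finset.Iic α', ∑ β ∈ Finset.Iic α,
    (mchoose α β : R) * A β' β * B (α' - β') (α - β)

/-- The identity element `1 ∈ Mat(R)`: the `(0,0)` block is `1`. -/
def matOne : Mat n R := fun α' α => if α' = 0 ∧ α = 0 then 1 else 0

/-- `A^{⊙m}`, the `m`-th symmetric power. -/
noncomputable def sympow (A : Mat n R) : ℕ → Mat n R
  | 0 => matOne
  | m + 1 => odot (sympow A m) A

/-- The row vector `h = (h₁,…,hₙ) ∈ M(0,1;R)` attached to `h : Fin n → R`. -/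
noncomputable def rowVec (h : Fin n → R) : Mat n R := fun α' α =>
  if α' = 0 then ∑ j : Fin n, (if α = Finsupp.single j 1 then h j else 0) else 0

/-- Multi-indices of degree `w` (a finite set). -/
noncomputable def degSet (n w : ℕ) : Finset (MultiIndex n) :=
  (Finset.Iic (Finsupp.equivFunOnFinite.symm fun _ : Fin n => w)).filter fun β => deg β = w

/-- Ordinary matrix product of `v ∈ M(0,w;R)` with `A ∈ M(p',w;R)`, contracting the
weight-`w` index (the columns of `A`, via transposition): the result, in `M(0,p';R)`,
has entries `(v·A)^{α'}_α = ∑_{|β| = w} v^{α'}_β A^{α}_β`. -/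
noncomputable def vecMul (w : ℕ) (v A : Mat n R) : Mat n R := fun α' α =>
  ∑ β ∈ degSet n w, v α' β * A α β

end SymProd

/-!
Order multi-indices lexicographically; this is a well-order compatible with addition. Call
`(r, c)` the leading entry of `A ≠ 0` if `r` is the least row on which `A` is nonzero and `c`
the least column with `A r c ≠ 0`. If `(a', a)` and `(b', b)` are the leading entries of `A` and
`B`, then in the sum defining `(A ⊙ B)^{a'+b'}_{a+b}` only the term `β' = a'`, `β = a` survives,
and it equals `C(a+b, a) A^{a'}_a B^{b'}_b ≠ 0`.
-/

namespace SymProd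

variable {n : ℕ} {R : Type*} [CommRing R]

@[simp]
lemma zero_odot (B : Mat n R) : odot 0 B = 0 := by
  funext α' α
  simp [odot]

@[simp]
lemma odot_zero (A : Mat n R) : odot A 0 = 0 := by
  funext α' α
  simp [odot]

lemma mchoose_add_left_pos (a b : MultiIndex n) : 0 < mchoose (a + b) a :=
  Finset.prod_pos fun _ _ => Nat.choose_pos (by simp)

structure IsLeadingEntry (A : Mat n R) (r c : MultiIndex n) : Prop where
  ne_zero : A r c ≠ 0
  row_le : ∀ r' c', A r' c' ≠ 0 → toLex r ≤ toLex r'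
  col_le : ∀ c', A r c' ≠ 0 → toLex c ≤ toLex c'

lemma exists_isLeadingEntry {A : Mat n R} (hA : A ≠ 0) : ∃ r c, IsLeadingEntry A r c := by
  let rows : Set (Lex (MultiIndex n)) := {r | ∃ c, A (ofLex r) c ≠ 0}
  have hrows : rows.Nonempty := by
    by_contra! h
    exact hA (funext fun r => funext fun c => by_contra fun hrc => h.subset ⟨c, hrc⟩)
  set r := wellFounded_lt.min rows hrows
  let cols : Set (Lex (MultiIndex n)) := {c | A (ofLex r) (ofLex c) ≠ 0}
  have hcols : cols.Nonempty := by
    obtain ⟨c, hc⟩ := wellFounded_lt.min_mem rows hrows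
    exact ⟨toLex c, hc⟩
  exact ⟨ofLex r, ofLex (wellFounded_lt.min cols hcols),
    wellFounded_lt.min_mem cols hcols,
    fun r' c' h => wellFounded_lt.min_le (s := rows) (x := toLex r') ⟨c', h⟩,
    fun c' h => wellFounded_lt.min_le (s := cols) (x := toLex c') h⟩

section LeadingEntry

variable {A B : Mat n R} {a' a b' b : MultiIndex n}

lemma IsLeadingEntry.eq_of_ne_zero (hA : IsLeadingEntry A a' a) (hB : IsLeadingEntry B b' b)
    {β' β : MultiIndex n} (hβ' : β' ≤ a' + b') (hβ : β ≤ a + b)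
    (hAβ : A β' β ≠ 0) (hBβ : B (a' + b' - β') (a + b - β) ≠ 0) : β' = a' ∧ β = a := by
  obtain ⟨hrow, hrow'⟩ : toLex a' = toLex β' ∧ toLex b' = toLex (a' + b' - β') :=
    (add_eq_add_iff_eq_and_eq (hA.row_le _ _ hAβ) (hB.row_le _ _ hBβ)).1
      (congrArg toLex (add_tsub_cancel_of_le hβ').symm)
  cases toLex.injective hrow
  rw [← toLex.injective hrow'] at hBβ
  obtain ⟨hcol, -⟩ : toLex a = toLex β ∧ toLex b = toLex (a + b - β) :=
    (add_eq_add_iff_eq_and_eq (hA.col_le _ hAβ) (hB.col_le _ hBβ)).1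
      (congrArg toLex (add_tsub_cancel_of_le hβ).symm)
  exact ⟨rfl, (toLex.injective hcol).symm⟩

lemma odot_add_add_of_isLeadingEntry (hA : IsLeadingEntry A a' a) (hB : IsLeadingEntry B b' b) :
    odot A B (a' + b') (a + b) = mchoose (a + b) a * A a' a * B b' b := by
  rw [odot, ← Finset.sum_product', Finset.sum_eq_single_of_mem (a', a) (by simp)]
  · simp
  · rintro ⟨β', β⟩ hmem hne
    rw [Finset.mem_product, Finset.mem_Iic, Finset.mem_Iic] at hmem
    by_contra hterm
    have hAβ : A β' β ≠ 0 := fun h => hterm (by simp [h])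
    have hBβ : B (a' + b' - β') (a + b - β) ≠ 0 := fun h => hterm (by simp [h])
    exact hne (Prod.ext_iff.2 (hA.eq_of_ne_zero hB hmem.1 hmem.2 hAβ hBβ))

end LeadingEntry

theorem odot_ne_zero [NoZeroDivisors R] [CharZero R] {A B : Mat n R} (hA : A ≠ 0) (hB : B ≠ 0) :
    odot A B ≠ 0 := by
  obtain ⟨a', a, hAa⟩ := exists_isLeadingEntry hA
  obtain ⟨b', b, hBb⟩ := exists_isLeadingEntry hB
  have hentry : odot A B (a' + b') (a + b) ≠ 0 := by
    rw [odot_add_add_of_isLeadingEntry hAa hBb]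
    exact mul_ne_zero (mul_ne_zero (Nat.cast_ne_zero.2 (mchoose_add_left_pos a b).ne')
      hAa.ne_zero) hBb.ne_zero
  exact fun h => hentry (by rw [h]; rfl)

end SymProd

open SymProd in
theorem odot_eq_zero_iff_general {n : ℕ} (F : Type*) [Field F] [CharZero F]
    (A B : Mat n F) :
    odot A B = 0 ↔ A = 0 ∨ B = 0 := by
  refine ⟨fun h => ?_, ?_⟩
  · by_contra! hAB
    exact odot_ne_zero hAB.1 hAB.2 h
  · rintro (rfl | rfl) <;> simp

open SymProd in
/-- over a field of characteristic zero the symmetric product has no zero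
divisors: for `A ∈ M(p',p;F)`, `B ∈ M(q',q;F)`, `A ⊙ B = 0` iff `A = 0` or `B = 0`. -/
theorem odot_eq_zero_iff {n : ℕ} (F : Type*) [Field F] [CharZero F] {p' p q' q : ℕ}
    (A B : Mat n F) (hA : IsHom p' p A) (hB : IsHom q' q B) :
    odot A B = 0 ↔ A = 0 ∨ B = 0 :=
  odot_eq_zero_iff_general F A B
end
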